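/- arXiv:1206.2941 — 4 statements merged into one kernel-verified Lean document; each statement's English description precedes it below -/
import Mathlib

section
/- Let G be an ∞-groupoid of type C (a globular presheaf on a contractible globular extension C). For every n ≥ 1, the quotient graph Π_n(G), with objects the (n-1)-arrows of G and morphisms the n-arrows up to homotopy, equipped with the composition induced by *^n_{n-1} and identities induced by k_{n-1}, is a groupoid: composition is associative, units are neutral, and every morphism is invertible (the inverse being induced by w^{n-1}_n). -/
/-!
STATEMENT 4: Let `G` be an ∞-groupoid of type `C` (a globular presheaf on a
contractible globular extension `C`). For every `n ≥ 1` (here `n = m + 1`), the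
quotient graph `Π_n(G)` — objects the `(n-1)`-arrows, morphisms the `n`-arrows up to
homotopy, composition induced by `*^n_{n-1}` and identities by `κ_{n-1}` — is a
groupoid, inverses being induced by `w^{n-1}_n`.  We express this at the level of
representatives: the homotopy relation is an equivalence relation compatible with
composition, and associativity, unit and inverse laws hold up to homotopy.
-/

open CategoryTheory Opposite

universe w v u

/-- A coglobular object: a category under the globe category 𝔾. -/
structure Coglob (E : Type u) [Category.{v} E] where
  D : ℕ → E
  σ : ∀ n, D n ⟶ D (n + 1)
  τ : ∀ n, D n ⟶ D (n + 1)
  relσ : ∀ n, σ n ≫ σ (n + 1) = σ n ≫ τ (n + 1)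
  relτ : ∀ n, τ n ≫ σ (n + 1) = τ n ≫ τ (n + 1)

namespace Coglob

variable {E : Type u} [Category.{v} E] (Φ : Coglob E)

/-- Iterated cosource `σ^{j+k}_j : D j ⟶ D (j+k)`. -/
def σUp (j : ℕ) : ∀ k : ℕ, Φ.D j ⟶ Φ.D (j + k)
  | 0 => 𝟙 _
  | k + 1 => σUp j k ≫ Φ.σ (j + k)

/-- Iterated cotarget `τ^{j+k}_j : D j ⟶ D (j+k)`. -/
def τUp (j : ℕ) : ∀ k : ℕ, Φ.D j ⟶ Φ.D (j + k)
  | 0 => 𝟙 _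
  | k + 1 => τUp j k ≫ Φ.τ (j + k)

lemma τUp_σ (j k : ℕ) :
    Φ.τUp j (k + 1) ≫ Φ.σ (j + k + 1) = Φ.τUp j (k + 2) := by
  show (Φ.τUp j k ≫ Φ.τ (j + k)) ≫ Φ.σ (j + k + 1) =
    (Φ.τUp j k ≫ Φ.τ (j + k)) ≫ Φ.τ (j + k + 1)
  rw [Category.assoc, Category.assoc, Φ.relτ]

lemma σUp_τ (j k : ℕ) :
    Φ.σUp j (k + 1) ≫ Φ.τ (j + k + 1) = Φ.σUp j (k + 2) := by
  show (Φ.σUp j k ≫ Φ.σ (j + k)) ≫ Φ.τ (j + k + 1) =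
    (Φ.σUp j k ≫ Φ.σ (j + k)) ≫ Φ.σ (j + k + 1)
  rw [Category.assoc, Category.assoc, Φ.relσ]

/-- Iterated cosource `D 0 ⟶ D n`. -/
def σZero : ∀ n : ℕ, Φ.D 0 ⟶ Φ.D n
  | 0 => 𝟙 _
  | n + 1 => σZero n ≫ Φ.σ n

/-- Globular parallelism of two morphisms with source a globe `D n`. -/
def Par : ∀ {n : ℕ} {Y : E}, (Φ.D n ⟶ Y) → (Φ.D n ⟶ Y) → Prop
  | 0, _, _, _ => True
  | m + 1, _, f, g => (Φ.σ m ≫ f = Φ.σ m ≫ g) ∧ (Φ.τ m ≫ f = Φ.τ m ≫ g)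

end Coglob

/-- Tables of dimensions, indexed by the dimension of the first globe: the table
`cons j d e T` glues a disk of dimension `j + d + 1` along the dimension `j` onto a
table whose first dimension is `j + e + 1` (so that both dimensions exceed the
gluing dimension, as required for a table of dimensions). -/
inductive GTable : ℕ → Type where
  | single (i : ℕ) : GTable i
  | cons (j d e : ℕ) (T : GTable (j + e + 1)) : GTable (j + d + 1)

/-- Dimension of a table: the greatest dimension appearing in it. -/
def GTable.dim : ∀ {i : ℕ}, GTable i → ℕ
  | _, .single i => i
  | _, .cons j d _ T => max (j + d + 1) T.dim

/-- Chosen globular sums on a category under 𝔾: for every table of dimensions, an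
iterated amalgamated sum of globes, glued along iterated cosources and cotargets,
with its universal property. This is the structure of a globular extension. -/
structure GSums {E : Type u} [Category.{v} E] (Φ : Coglob E) where
  S : ∀ {i : ℕ}, GTable i → E
  single_eq : ∀ i, S (.single i) = Φ.D i
  ι : ∀ {i : ℕ} (T : GTable i), Φ.D i ⟶ S T
  ι_single : ∀ i, ι (.single i) = eqToHom (single_eq i).symm
  ρ : ∀ {j d e : ℕ} (T : GTable (j + e + 1)), S T ⟶ S (.cons j d e T)
  glue : ∀ {j d e : ℕ} (T : GTable (j + e + 1)),
    Φ.σUp j (d + 1) ≫ ι (.cons j d e T) = Φ.τUp j (e + 1) ≫ ι T ≫ ρ T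
  desc : ∀ {j d e : ℕ} (T : GTable (j + e + 1)) {Y : E}
    (f : Φ.D (j + d + 1) ⟶ Y) (g : S T ⟶ Y),
    Φ.σUp j (d + 1) ≫ f = Φ.τUp j (e + 1) ≫ ι T ≫ g → (S (.cons j d e T) ⟶ Y)
  ι_desc : ∀ {j d e : ℕ} (T : GTable (j + e + 1)) {Y : E}
    (f : Φ.D (j + d + 1) ⟶ Y) (g : S T ⟶ Y) (h), ι (.cons j d e T) ≫ desc T f g h = f
  ρ_desc : ∀ {j d e : ℕ} (T : GTable (j + e + 1)) {Y : E}
    (f : Φ.D (j + d + 1) ⟶ Y) (g : S T ⟶ Y) (h), ρ T ≫ desc T f g h = g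
  hom_ext : ∀ {j d e : ℕ} (T : GTable (j + e + 1)) {Y : E}
    (m m' : S (.cons j d e T) ⟶ Y),
    ι (.cons j d e T) ≫ m = ι (.cons j d e T) ≫ m' → ρ T ≫ m = ρ T ≫ m' → m = m'

namespace GSums

variable {E : Type u} [Category.{v} E] {Φ : Coglob E} (GS : GSums Φ)

/-- The binary globular sum `D (j+k+1) ∐_{D j} D (j+k+1)`. -/
def Btab (j k : ℕ) : GTable (j + k + 1) := .cons j k k (.single (j + k + 1))

/-- First canonical morphism `ε₁ : D (j+k+1) ⟶ D (j+k+1) ∐_{D j} D (j+k+1)`. -/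
def ε₁ (j k : ℕ) : Φ.D (j + k + 1) ⟶ GS.S (Btab j k) := GS.ι (Btab j k)

/-- Second canonical morphism `ε₂ : D (j+k+1) ⟶ D (j+k+1) ∐_{D j} D (j+k+1)`. -/
def ε₂ (j k : ℕ) : Φ.D (j + k + 1) ⟶ GS.S (Btab j k) :=
  eqToHom (GS.single_eq (j + k + 1)).symm ≫ GS.ρ (GTable.single (j + k + 1))

/-- `C` is `(∞,0)`-contractible: every admissible pair admits a lifting; a pair
`(f, g) : D n ⟶ S` is admissible when `S` is a globular sum of dimension `≤ n + 1`
and `f, g` are globularly parallel. -/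
def Contractible : Prop :=
  ∀ (n : ℕ) {i : ℕ} (T : GTable i), T.dim ≤ n + 1 →
    ∀ f g : Φ.D n ⟶ GS.S T, Φ.Par f g →
      ∃ h : Φ.D (n + 1) ⟶ GS.S T, Φ.σ n ≫ h = f ∧ Φ.τ n ≫ h = g

/-- A presheaf `X` on `C` is a model (an ∞-groupoid of type `C`) when it sends each
globular sum to the corresponding iterated fiber product; equivalently each
amalgamation stage is sent to a pullback of sets. -/
def IsModel (X : Eᵒᵖ ⥤ Type w) : Prop :=
  ∀ {j d e : ℕ} (T : GTable (j + e + 1))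
    (a : X.obj (op (Φ.D (j + d + 1)))) (b : X.obj (op (GS.S T))),
    X.map (Φ.σUp j (d + 1)).op a = X.map (Φ.τUp j (e + 1) ≫ GS.ι T).op b →
      ∃! x : X.obj (op (GS.S (.cons j d e T))),
        X.map (GS.ι (.cons j d e T)).op x = a ∧ X.map (GS.ρ T).op x = b

/-- The amalgamated sum `f ∐_{D j} f` of an endo-cosimplicial-type map of globes. -/
def amalgMap (j k : ℕ) (f : Φ.D (j + k + 1) ⟶ Φ.D (j + k + 2))
    (hσ : Φ.σUp j (k + 1) ≫ f = Φ.σUp j (k + 2))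
    (hτ : Φ.τUp j (k + 1) ≫ f = Φ.τUp j (k + 2)) :
    GS.S (Btab j k) ⟶ GS.S (Btab j (k + 1)) :=
  GS.desc (GTable.single (j + k + 1)) (f ≫ GS.ε₁ j (k + 1))
    (eqToHom (GS.single_eq (j + k + 1)) ≫ f ≫ GS.ε₂ j (k + 1)) (by
      have h1 := GS.glue (j := j) (d := k + 1) (e := k + 1) (GTable.single (j + (k + 1) + 1))
      rw [GS.ι_single] at h1
      simp only [GS.ι_single, ← Category.assoc, hσ]
      simp only [Category.assoc, eqToHom_trans, eqToHom_refl, Category.id_comp]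
      rw [← Category.assoc, hτ]
      exact h1)

/-- The amalgamated sum `σ ∐_{D j} σ`. -/
def amalgσ (j k : ℕ) : GS.S (Btab j k) ⟶ GS.S (Btab j (k + 1)) :=
  GS.amalgMap j k (Φ.σ (j + k + 1)) rfl (Φ.τUp_σ j k)

/-- The amalgamated sum `τ ∐_{D j} τ`. -/
def amalgτ (j k : ℕ) : GS.S (Btab j k) ⟶ GS.S (Btab j (k + 1)) :=
  GS.amalgMap j k (Φ.τ (j + k + 1)) (Φ.σUp_τ j k) rfl

end GSums

/-- A pregroupoidal structure on a (contractible) globular extension: chosen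
coherence morphisms `∇^i_j`, `κ_i` and `w^i_j` for compositions, units and inverses,
each a lifting of the corresponding admissible pair. -/
structure Pregroupoidal {E : Type u} [Category.{v} E] {Φ : Coglob E} (GS : GSums Φ) where
  nabla : ∀ j k, Φ.D (j + k + 1) ⟶ GS.S (GSums.Btab j k)
  kappa : ∀ n, Φ.D (n + 1) ⟶ Φ.D n
  winv : ∀ j k, Φ.D (j + k + 1) ⟶ Φ.D (j + k + 1)
  kappa_σ : ∀ n, Φ.σ n ≫ kappa n = 𝟙 (Φ.D n)
  kappa_τ : ∀ n, Φ.τ n ≫ kappa n = 𝟙 (Φ.D n)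
  nabla_σ₀ : ∀ j, Φ.σ j ≫ nabla j 0 = Φ.σ j ≫ GS.ε₂ j 0
  nabla_τ₀ : ∀ j, Φ.τ j ≫ nabla j 0 = Φ.τ j ≫ GS.ε₁ j 0
  nabla_σ : ∀ j k, Φ.σ (j + k + 1) ≫ nabla j (k + 1) = nabla j k ≫ GS.amalgσ j k
  nabla_τ : ∀ j k, Φ.τ (j + k + 1) ≫ nabla j (k + 1) = nabla j k ≫ GS.amalgτ j k
  winv_σ₀ : ∀ j, Φ.σ j ≫ winv j 0 = Φ.τ j
  winv_τ₀ : ∀ j, Φ.τ j ≫ winv j 0 = Φ.σ j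
  winv_σ : ∀ j k, Φ.σ (j + k + 1) ≫ winv j (k + 1) = winv j k ≫ Φ.σ (j + k + 1)
  winv_τ : ∀ j k, Φ.τ (j + k + 1) ≫ winv j (k + 1) = winv j k ≫ Φ.τ (j + k + 1)

section ModelOps

variable {E : Type u} [Category.{v} E] {Φ : Coglob E} {GS : GSums Φ}
variable (X : Eᵒᵖ ⥤ Type w)

/-- The set of `n`-arrows of a globular presheaf. -/
def arr (n : ℕ) : Type w := X.obj (op (Φ.D n))

variable {X}

/-- Source of an `(n+1)`-arrow. -/
def asrc {n : ℕ} (u : arr (Φ := Φ) X (n + 1)) : arr (Φ := Φ) X n :=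
  X.map (Φ.σ n).op u

/-- Target of an `(n+1)`-arrow. -/
def atgt {n : ℕ} (u : arr (Φ := Φ) X (n + 1)) : arr (Φ := Φ) X n :=
  X.map (Φ.τ n).op u

/-- Homotopy of `n`-arrows: existence of a connecting `(n+1)`-arrow. -/
def Htp (n : ℕ) (u v : arr (Φ := Φ) X n) : Prop :=
  ∃ h : arr (Φ := Φ) X (n + 1), asrc h = u ∧ atgt h = v

/-- Composability in codimension `k+1`: the iterated `j`-source of `u` agrees with
the iterated `j`-target of `v`. -/
def Composable (j k : ℕ) (u v : arr (Φ := Φ) X (j + k + 1)) : Prop :=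
  X.map (Φ.σUp j (k + 1)).op u = X.map (Φ.τUp j (k + 1)).op v

/-- The element of `X` of the binary globular sum determined by a composable pair,
via the model (fiber product) condition. -/
noncomputable def pairUp (hm : GS.IsModel X) {j k : ℕ}
    (u v : arr (Φ := Φ) X (j + k + 1)) (hc : Composable j k u v) :
    X.obj (op (GS.S (GSums.Btab j k))) :=
  (hm (GTable.single (j + k + 1)) u
    (X.map (eqToHom (GS.single_eq (j + k + 1))).op v) (by
      have key : (eqToHom (GS.single_eq (j + k + 1))).op ≫
          (Φ.τUp j (k + 1) ≫ GS.ι (GTable.single (j + k + 1))).op = (Φ.τUp j (k + 1)).op := by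
        rw [← op_comp, Category.assoc, GS.ι_single, eqToHom_trans, eqToHom_refl,
          Category.comp_id]
      refine hc.trans ?_
      rw [← key]
      exact FunctorToTypes.map_comp_apply X _ _ _)).exists.choose

/-- The composition `u *^{j+k+1}_j v` of arrows (`u` after `v`) induced by the chosen
morphism `∇^{j+k+1}_j`; defined as `u` on non-composable pairs. -/
noncomputable def gcomp (hm : GS.IsModel X) (P : Pregroupoidal GS)
    (j k : ℕ) (u v : arr (Φ := Φ) X (j + k + 1)) : arr (Φ := Φ) X (j + k + 1) := by
  classical
  exact if hc : Composable j k u v then X.map (P.nabla j k).op (pairUp hm u v hc) else u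

/-- The unit `(n+1)`-arrow on an `n`-arrow, induced by `κ_n`. -/
def gunit (P : Pregroupoidal GS) {n : ℕ} (u : arr (Φ := Φ) X n) :
    arr (Φ := Φ) X (n + 1) :=
  X.map (P.kappa n).op u

/-- The inverse `w^{j}_{j+k+1}` of an arrow. -/
def gwinv (P : Pregroupoidal GS) (j k : ℕ) (u : arr (Φ := Φ) X (j + k + 1)) :
    arr (Φ := Φ) X (j + k + 1) :=
  X.map (P.winv j k).op u

/-- Iterated counit `D n ⟶ D 0`. -/
def kDown (P : Pregroupoidal GS) : ∀ n : ℕ, Φ.D n ⟶ Φ.D 0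
  | 0 => 𝟙 _
  | n + 1 => P.kappa n ≫ kDown P n

/-- The iterated unit `n`-arrow on an object. -/
def unitIter (P : Pregroupoidal GS) (n : ℕ) (x : arr (Φ := Φ) X 0) :
    arr (Φ := Φ) X n :=
  X.map (kDown P n).op x

end ModelOps


/-!
Every groupoid law compares two arrows that are images of one element `w ∈ X(S)`, `S` a
globular sum of dimension `≤ n + 1` assembled from the arrows involved by the fiber-product
condition, under two globularly parallel maps `D n ⟶ S`. Contractibility lifts such a pair
to `D (n + 1) ⟶ S`, and the image of `w` under the lift is the required homotopy.
Symmetry and transitivity of the homotopy relation come from inverses and composition one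
dimension up, and composition respects homotopy because the composite `*^{n+1}_{n-1}` of two
homotopies is a homotopy between the composites.
-/

namespace Coglob

variable {E : Type u} [Category.{v} E] (Φ : Coglob E)

@[simp]
lemma σUp_one (j : ℕ) : Φ.σUp j 1 = Φ.σ j := by
  simp [σUp]

@[simp]
lemma τUp_one (j : ℕ) : Φ.τUp j 1 = Φ.τ j := by
  simp [τUp]

end Coglob

namespace GSums

variable {E : Type u} [Category.{v} E] {Φ : Coglob E} (GS : GSums Φ)

lemma ε_glue (j k : ℕ) :
    Φ.σUp j (k + 1) ≫ GS.ε₁ j k = Φ.τUp j (k + 1) ≫ GS.ε₂ j k := by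
  simpa [ε₁, ε₂, Btab, GS.ι_single] using GS.glue (d := k) (e := k) (.single (j + k + 1))

def pairDesc {j k : ℕ} {Y : E} (f g : Φ.D (j + k + 1) ⟶ Y)
    (hfg : Φ.σUp j (k + 1) ≫ f = Φ.τUp j (k + 1) ≫ g) : GS.S (Btab j k) ⟶ Y :=
  GS.desc (.single (j + k + 1)) f (eqToHom (GS.single_eq (j + k + 1)) ≫ g)
    (by simpa [GS.ι_single] using hfg)

section pairDesc

variable {j k : ℕ} {Y : E} (f g : Φ.D (j + k + 1) ⟶ Y)
  (hfg : Φ.σUp j (k + 1) ≫ f = Φ.τUp j (k + 1) ≫ g)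

@[simp]
lemma ε₁_pairDesc : GS.ε₁ j k ≫ GS.pairDesc f g hfg = f :=
  GS.ι_desc _ _ _ _

@[simp]
lemma ε₂_pairDesc : GS.ε₂ j k ≫ GS.pairDesc f g hfg = g := by
  unfold ε₂ pairDesc
  erw [Category.assoc, GS.ρ_desc, eqToHom_trans_assoc, eqToHom_refl, Category.id_comp]

end pairDesc

section amalgMap

variable {j k : ℕ} (f : Φ.D (j + k + 1) ⟶ Φ.D (j + k + 2))
  (hσ : Φ.σUp j (k + 1) ≫ f = Φ.σUp j (k + 2)) (hτ : Φ.τUp j (k + 1) ≫ f = Φ.τUp j (k + 2))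

lemma amalgMap_eq_pairDesc : GS.amalgMap j k f hσ hτ =
    GS.pairDesc (f ≫ GS.ε₁ j (k + 1)) (f ≫ GS.ε₂ j (k + 1))
      (by rw [reassoc_of% hσ, reassoc_of% hτ]; exact GS.ε_glue j (k + 1)) :=
  rfl

@[simp]
lemma ε₁_amalgMap : GS.ε₁ j k ≫ GS.amalgMap j k f hσ hτ = f ≫ GS.ε₁ j (k + 1) := by
  rw [amalgMap_eq_pairDesc, ε₁_pairDesc]

@[simp]
lemma ε₂_amalgMap : GS.ε₂ j k ≫ GS.amalgMap j k f hσ hτ = f ≫ GS.ε₂ j (k + 1) := by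
  rw [amalgMap_eq_pairDesc, ε₂_pairDesc]

end amalgMap

lemma ε₁_amalgσ (j k : ℕ) : GS.ε₁ j k ≫ GS.amalgσ j k = Φ.σ (j + k + 1) ≫ GS.ε₁ j (k + 1) :=
  GS.ε₁_amalgMap _ _ _

lemma ε₂_amalgσ (j k : ℕ) : GS.ε₂ j k ≫ GS.amalgσ j k = Φ.σ (j + k + 1) ≫ GS.ε₂ j (k + 1) :=
  GS.ε₂_amalgMap _ _ _

lemma ε₁_amalgτ (j k : ℕ) : GS.ε₁ j k ≫ GS.amalgτ j k = Φ.τ (j + k + 1) ≫ GS.ε₁ j (k + 1) :=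
  GS.ε₁_amalgMap _ _ _

lemma ε₂_amalgτ (j k : ℕ) : GS.ε₂ j k ≫ GS.amalgτ j k = Φ.τ (j + k + 1) ≫ GS.ε₂ j (k + 1) :=
  GS.ε₂_amalgMap _ _ _

/-- The ternary globular sum `D (j+1) ∐_{D j} D (j+1) ∐_{D j} D (j+1)`. -/
def Ttab (j : ℕ) : GTable (j + 0 + 1) := .cons j 0 0 (Btab j 0)

def ι₁ (j : ℕ) : Φ.D (j + 0 + 1) ⟶ GS.S (Ttab j) := GS.ι (Ttab j)

def ι₂ (j : ℕ) : Φ.D (j + 0 + 1) ⟶ GS.S (Ttab j) :=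
  GS.ε₁ j 0 ≫ GS.ρ (j := j) (d := 0) (e := 0) (Btab j 0)

def ι₃ (j : ℕ) : Φ.D (j + 0 + 1) ⟶ GS.S (Ttab j) :=
  GS.ε₂ j 0 ≫ GS.ρ (j := j) (d := 0) (e := 0) (Btab j 0)

lemma Ttab_dim (j : ℕ) : (Ttab j).dim = j + 1 := by
  simp [Ttab, Btab, GTable.dim]

-- The gluing conditions at `k = 0` keep the form `σUp j (0 + 1)` in which `pairDesc` expects them.
lemma σUp_ι₁ (j : ℕ) : Φ.σUp j (0 + 1) ≫ GS.ι₁ j = Φ.τUp j (0 + 1) ≫ GS.ι₂ j :=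
  GS.glue (j := j) (d := 0) (e := 0) (Btab j 0)

lemma σUp_ι₂ (j : ℕ) : Φ.σUp j (0 + 1) ≫ GS.ι₂ j = Φ.τUp j (0 + 1) ≫ GS.ι₃ j :=
  (Category.assoc _ _ _).symm.trans ((GS.ε_glue j 0 =≫ _).trans (Category.assoc _ _ _))

end GSums

namespace Pregroupoidal

variable {E : Type u} [Category.{v} E] {Φ : Coglob E} {GS : GSums Φ} (P : Pregroupoidal GS)
  {j : ℕ} {Y : E} (f g : Φ.D (j + 0 + 1) ⟶ Y) (hfg : Φ.σUp j (0 + 1) ≫ f = Φ.τUp j (0 + 1) ≫ g)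

lemma σUp_nabla_pairDesc :
    Φ.σUp j (0 + 1) ≫ P.nabla j 0 ≫ GS.pairDesc f g hfg = Φ.σUp j (0 + 1) ≫ g := by
  show Φ.σUp j 1 ≫ _ = Φ.σUp j 1 ≫ _
  rw [Coglob.σUp_one, reassoc_of% P.nabla_σ₀ j, GS.ε₂_pairDesc]

lemma τUp_nabla_pairDesc :
    Φ.τUp j (0 + 1) ≫ P.nabla j 0 ≫ GS.pairDesc f g hfg = Φ.τUp j (0 + 1) ≫ f := by
  show Φ.τUp j 1 ≫ _ = Φ.τUp j 1 ≫ _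
  rw [Coglob.τUp_one, reassoc_of% P.nabla_τ₀ j, GS.ε₁_pairDesc]

end Pregroupoidal

section Model

variable {E : Type u} [Category.{v} E] {Φ : Coglob E} {GS : GSums Φ} {X : Eᵒᵖ ⥤ Type w}

/- Arrows are typed `X.obj (op (Φ.D n))` below rather than `arr X n`: the two agree
definitionally, but `rw` only matches through the former. -/

lemma map_op_map_op {A B C : E} (p : A ⟶ B) (q : B ⟶ C) (x : X.obj (op C)) :
    X.map p.op (X.map q.op x) = X.map (p ≫ q).op x := by
  simp

lemma atgt_asrc_eq_atgt_atgt {n : ℕ} (h : X.obj (op (Φ.D (n + 2)))) :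
    atgt (asrc h) = atgt (atgt h) := by
  unfold asrc atgt
  rw [map_op_map_op, map_op_map_op, Φ.relτ]

lemma composable_zero_iff {j : ℕ} (u v : X.obj (op (Φ.D (j + 1)))) :
    Composable j 0 u v ↔ asrc u = atgt v := by
  show X.map (Φ.σUp j 1).op u = X.map (Φ.τUp j 1).op v ↔ _
  rw [Coglob.σUp_one, Coglob.τUp_one]
  rfl

lemma composable_one_iff {j : ℕ} (u v : X.obj (op (Φ.D (j + 2)))) :
    Composable j 1 u v ↔ asrc (asrc u) = atgt (atgt v) := by
  show X.map (Φ.σUp j 1 ≫ Φ.σ (j + 1)).op u = X.map (Φ.τUp j 1 ≫ Φ.τ (j + 1)).op v ↔ _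
  rw [Coglob.σUp_one, Coglob.τUp_one, ← map_op_map_op, ← map_op_map_op]
  rfl

lemma composable_map {j k : ℕ} {Y : E} {f g : Φ.D (j + k + 1) ⟶ Y}
    (hfg : Φ.σUp j (k + 1) ≫ f = Φ.τUp j (k + 1) ≫ g) (w : X.obj (op Y)) :
    Composable j k (X.map f.op w) (X.map g.op w) := by
  unfold Composable
  rw [map_op_map_op, map_op_map_op, hfg]

variable (hm : GS.IsModel X) (P : Pregroupoidal GS)

@[simp]
lemma asrc_gunit {n : ℕ} (x : X.obj (op (Φ.D n))) : asrc (gunit P x) = x := by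
  unfold asrc gunit
  rw [map_op_map_op, P.kappa_σ, op_id, X.map_id_apply]

@[simp]
lemma atgt_gunit {n : ℕ} (x : X.obj (op (Φ.D n))) : atgt (gunit P x) = x := by
  unfold atgt gunit
  rw [map_op_map_op, P.kappa_τ, op_id, X.map_id_apply]

@[simp]
lemma asrc_gwinv {j : ℕ} (u : X.obj (op (Φ.D (j + 1)))) : asrc (gwinv P j 0 u) = atgt u := by
  unfold asrc gwinv atgt
  rw [map_op_map_op, P.winv_σ₀]

@[simp]
lemma atgt_gwinv {j : ℕ} (u : X.obj (op (Φ.D (j + 1)))) : atgt (gwinv P j 0 u) = asrc u := by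
  unfold atgt gwinv asrc
  rw [map_op_map_op, P.winv_τ₀]

section pairUp

variable {j k : ℕ} {u v : X.obj (op (Φ.D (j + k + 1)))}

lemma Composable.map_σUp_eq (hc : Composable j k u v) :
    X.map (Φ.σUp j (k + 1)).op u = X.map (Φ.τUp j (k + 1) ≫ GS.ι (.single (j + k + 1))).op
      (X.map (eqToHom (GS.single_eq (j + k + 1))).op v) := by
  rw [hc, GS.ι_single, ← map_op_map_op, map_op_map_op (eqToHom _), eqToHom_trans,
    eqToHom_refl]
  exact congrArg _ (X.map_id_apply _ v).symm

lemma pairUp_spec (hc : Composable j k u v) :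
    X.map (GS.ε₁ j k).op (pairUp hm u v hc) = u ∧
      X.map (GS.ρ (.single (j + k + 1))).op (pairUp hm u v hc) =
        X.map (eqToHom (GS.single_eq (j + k + 1))).op v :=
  (hm _ u _ (hc.map_σUp_eq)).exists.choose_spec

lemma map_ε₂_eq (x : X.obj (op (GS.S (GSums.Btab j k)))) :
    X.map (GS.ε₂ j k).op x = X.map (eqToHom (GS.single_eq (j + k + 1)).symm).op
      (X.map (GS.ρ (.single (j + k + 1))).op x) :=
  (map_op_map_op _ _ x).symm

@[simp]
lemma map_ε₁_pairUp (hc : Composable j k u v) :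
    X.map (GS.ε₁ j k).op (pairUp hm u v hc) = u :=
  (pairUp_spec hm hc).1

@[simp]
lemma map_ε₂_pairUp (hc : Composable j k u v) :
    X.map (GS.ε₂ j k).op (pairUp hm u v hc) = v := by
  rw [map_ε₂_eq, (pairUp_spec hm hc).2, map_op_map_op, eqToHom_trans, eqToHom_refl]
  exact X.map_id_apply _ v

lemma eq_pairUp (hc : Composable j k u v) {x : X.obj (op (GS.S (GSums.Btab j k)))}
    (h₁ : X.map (GS.ε₁ j k).op x = u) (h₂ : X.map (GS.ε₂ j k).op x = v) :
    x = pairUp hm u v hc := by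
  refine (hm _ u _ (hc.map_σUp_eq)).unique ⟨h₁, ?_⟩ (pairUp_spec hm hc)
  rw [← h₂, map_ε₂_eq, map_op_map_op, eqToHom_trans, eqToHom_refl]
  exact (X.map_id_apply _ _).symm

lemma gcomp_eq_map_nabla (hc : Composable j k u v) {x : X.obj (op (GS.S (GSums.Btab j k)))}
    (h₁ : X.map (GS.ε₁ j k).op x = u) (h₂ : X.map (GS.ε₂ j k).op x = v) :
    gcomp hm P j k u v = X.map (P.nabla j k).op x := by
  unfold gcomp
  exact (dif_pos hc).trans (congrArg _ (eq_pairUp hm hc h₁ h₂).symm)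

end pairUp

variable {j k : ℕ}

lemma gcomp_map_map {Y : E} (f g : Φ.D (j + k + 1) ⟶ Y)
    (hfg : Φ.σUp j (k + 1) ≫ f = Φ.τUp j (k + 1) ≫ g) (w : X.obj (op Y)) :
    gcomp hm P j k (X.map f.op w) (X.map g.op w) =
      X.map (P.nabla j k ≫ GS.pairDesc f g hfg).op w := by
  rw [← map_op_map_op]
  exact gcomp_eq_map_nabla hm P (composable_map hfg w)
    (by rw [map_op_map_op, GS.ε₁_pairDesc]) (by rw [map_op_map_op, GS.ε₂_pairDesc])

lemma asrc_gcomp {u v : X.obj (op (Φ.D (j + 1)))} (hc : Composable j 0 u v) :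
    asrc (gcomp hm P j 0 u v) = asrc v := by
  unfold asrc
  rw [gcomp_eq_map_nabla hm P hc (map_ε₁_pairUp hm hc) (map_ε₂_pairUp hm hc), map_op_map_op,
    P.nabla_σ₀, ← map_op_map_op, map_ε₂_pairUp]

lemma atgt_gcomp {u v : X.obj (op (Φ.D (j + 1)))} (hc : Composable j 0 u v) :
    atgt (gcomp hm P j 0 u v) = atgt u := by
  unfold atgt
  rw [gcomp_eq_map_nabla hm P hc (map_ε₁_pairUp hm hc) (map_ε₂_pairUp hm hc), map_op_map_op,
    P.nabla_τ₀, ← map_op_map_op, map_ε₁_pairUp]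

lemma Composable.map_asrc {h h' : X.obj (op (Φ.D (j + (k + 1) + 1)))}
    (hc : Composable j (k + 1) h h') : Composable j k (asrc h) (asrc h') := by
  unfold Composable asrc at *
  rw [map_op_map_op, map_op_map_op, Φ.τUp_σ]
  exact hc

lemma Composable.map_atgt {h h' : X.obj (op (Φ.D (j + (k + 1) + 1)))}
    (hc : Composable j (k + 1) h h') : Composable j k (atgt h) (atgt h') := by
  unfold Composable atgt at *
  rw [map_op_map_op, map_op_map_op, Φ.σUp_τ]
  exact hc

lemma asrc_gcomp_succ {h h' : X.obj (op (Φ.D (j + (k + 1) + 1)))}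
    (hc : Composable j (k + 1) h h') :
    asrc (gcomp hm P j (k + 1) h h') = gcomp hm P j k (asrc h) (asrc h') := by
  rw [gcomp_eq_map_nabla hm P hc (map_ε₁_pairUp hm hc) (map_ε₂_pairUp hm hc),
    gcomp_eq_map_nabla hm P hc.map_asrc (x := X.map (GS.amalgσ j k).op (pairUp hm h h' hc))]
  · show X.map (Φ.σ (j + k + 1)).op (X.map (P.nabla j (k + 1)).op _) = _
    rw [map_op_map_op, P.nabla_σ, ← map_op_map_op]
  · rw [map_op_map_op, GSums.ε₁_amalgσ, ← map_op_map_op, map_ε₁_pairUp]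
    rfl
  · rw [map_op_map_op, GSums.ε₂_amalgσ, ← map_op_map_op, map_ε₂_pairUp]
    rfl

lemma atgt_gcomp_succ {h h' : X.obj (op (Φ.D (j + (k + 1) + 1)))}
    (hc : Composable j (k + 1) h h') :
    atgt (gcomp hm P j (k + 1) h h') = gcomp hm P j k (atgt h) (atgt h') := by
  rw [gcomp_eq_map_nabla hm P hc (map_ε₁_pairUp hm hc) (map_ε₂_pairUp hm hc),
    gcomp_eq_map_nabla hm P hc.map_atgt (x := X.map (GS.amalgτ j k).op (pairUp hm h h' hc))]
  · show X.map (Φ.τ (j + k + 1)).op (X.map (P.nabla j (k + 1)).op _) = _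
    rw [map_op_map_op, P.nabla_τ, ← map_op_map_op]
  · rw [map_op_map_op, GSums.ε₁_amalgτ, ← map_op_map_op, map_ε₁_pairUp]
    rfl
  · rw [map_op_map_op, GSums.ε₂_amalgτ, ← map_op_map_op, map_ε₂_pairUp]
    rfl

end Model

section Homotopy

variable {E : Type u} [Category.{v} E] {Φ : Coglob E} {GS : GSums Φ} {X : Eᵒᵖ ⥤ Type w}

lemma htp_map_of_par (hC : GS.Contractible) {n i : ℕ} (T : GTable i) (hT : T.dim ≤ n + 2)
    {f g : Φ.D (n + 1) ⟶ GS.S T} (hσ : Φ.σ n ≫ f = Φ.σ n ≫ g) (hτ : Φ.τ n ≫ f = Φ.τ n ≫ g)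
    (w : X.obj (op (GS.S T))) :
    Htp (n + 1) (X.map f.op w) (X.map g.op w) := by
  obtain ⟨h, rfl, rfl⟩ := hC (n + 1) T hT f g ⟨hσ, hτ⟩
  exact ⟨X.map h.op w, map_op_map_op _ _ w, map_op_map_op _ _ w⟩

lemma htp_map_of_par_globe (hC : GS.Contractible) {n i : ℕ} (hi : i ≤ n + 2)
    {f g : Φ.D (n + 1) ⟶ Φ.D i} (hσ : Φ.σ n ≫ f = Φ.σ n ≫ g) (hτ : Φ.τ n ≫ f = Φ.τ n ≫ g)
    (w : X.obj (op (Φ.D i))) :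
    Htp (n + 1) (X.map f.op w) (X.map g.op w) := by
  have e := GS.single_eq i
  have transport : ∀ f' : Φ.D (n + 1) ⟶ Φ.D i,
      X.map f'.op w = X.map (f' ≫ eqToHom e.symm).op (X.map (eqToHom e).op w) := by
    intro f'
    rw [map_op_map_op, Category.assoc, eqToHom_trans, eqToHom_refl, Category.comp_id]
  rw [transport f, transport g]
  exact htp_map_of_par hC (.single i) hi (by rw [reassoc_of% hσ]) (by rw [reassoc_of% hτ]) _

theorem htp_equivalence (hm : GS.IsModel X) (P : Pregroupoidal GS) (n : ℕ) :
    Equivalence (Htp (Φ := Φ) (X := X) n) where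
  refl u := ⟨gunit P u, asrc_gunit P u, atgt_gunit P u⟩
  symm := fun ⟨h, h₁, h₂⟩ => ⟨gwinv P n 0 h, (asrc_gwinv P h).trans h₂, (atgt_gwinv P h).trans h₁⟩
  trans := fun ⟨h, h₁, h₂⟩ ⟨h', h₁', h₂'⟩ =>
    have hc : Composable n 0 h' h := (composable_zero_iff h' h).2 (h₁'.trans h₂.symm)
    ⟨gcomp hm P n 0 h' h, (asrc_gcomp hm P hc).trans h₁, (atgt_gcomp hm P hc).trans h₂'⟩

theorem htp_gcomp_congr (hm : GS.IsModel X) (P : Pregroupoidal GS) {j : ℕ}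
    {u u' v v' : X.obj (op (Φ.D (j + 1)))} (hc : Composable j 0 u v)
    (hu : Htp (j + 1) u u') (hv : Htp (j + 1) v v') :
    Htp (j + 1) (gcomp hm P j 0 u v) (gcomp hm P j 0 u' v') := by
  obtain ⟨h, rfl, rfl⟩ := hu
  obtain ⟨h', rfl, rfl⟩ := hv
  have hc₂ : Composable j 1 h h' := (composable_one_iff h h').2
    (((composable_zero_iff _ _).1 hc).trans (atgt_asrc_eq_atgt_atgt h'))
  exact ⟨gcomp hm P j 1 h h', asrc_gcomp_succ hm P hc₂, atgt_gcomp_succ hm P hc₂⟩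

lemma exists_triple_of_composable (hm : GS.IsModel X) {j : ℕ} {u v z : X.obj (op (Φ.D (j + 1)))}
    (huv : Composable j 0 u v) (hvz : Composable j 0 v z) :
    ∃ w : X.obj (op (GS.S (GSums.Ttab j))),
      X.map (GS.ι₁ j).op w = u ∧ X.map (GS.ι₂ j).op w = v ∧ X.map (GS.ι₃ j).op w = z := by
  obtain ⟨w, ⟨hw₁, hw₂⟩, -⟩ := hm (j := j) (d := 0) (e := 0) (GSums.Btab j 0) u
    (pairUp (k := 0) hm v z hvz) (by
      rw [← map_op_map_op]
      exact huv.trans (congrArg _ (map_ε₁_pairUp hm hvz).symm))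
  refine ⟨w, hw₁, ?_, ?_⟩
  · exact (map_op_map_op _ _ w).symm.trans ((congrArg _ hw₂).trans (map_ε₁_pairUp hm hvz))
  · exact (map_op_map_op _ _ w).symm.trans ((congrArg _ hw₂).trans (map_ε₂_pairUp hm hvz))

theorem htp_gcomp_assoc (hC : GS.Contractible) (hm : GS.IsModel X) (P : Pregroupoidal GS)
    {j : ℕ} {u v z : X.obj (op (Φ.D (j + 1)))}
    (huv : Composable j 0 u v) (hvz : Composable j 0 v z) :
    Htp (j + 1) (gcomp hm P j 0 (gcomp hm P j 0 u v) z)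
      (gcomp hm P j 0 u (gcomp hm P j 0 v z)) := by
  obtain ⟨w, rfl, rfl, rfl⟩ := exists_triple_of_composable hm huv hvz
  set γ := GS.pairDesc (j := j) (k := 0) (GS.ι₁ j) (GS.ι₂ j) (GS.σUp_ι₁ j)
  set δ := GS.pairDesc (j := j) (k := 0) (GS.ι₂ j) (GS.ι₃ j) (GS.σUp_ι₂ j)
  rw [gcomp_map_map hm P (k := 0) _ _ (GS.σUp_ι₁ j),
    gcomp_map_map hm P (k := 0) _ _ (GS.σUp_ι₂ j),
    gcomp_map_map hm P (k := 0) (P.nabla j 0 ≫ γ) (GS.ι₃ j)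
      ((P.σUp_nabla_pairDesc _ _ _).trans (GS.σUp_ι₂ j)),
    gcomp_map_map hm P (k := 0) (GS.ι₁ j) (P.nabla j 0 ≫ δ)
      ((GS.σUp_ι₁ j).trans (P.τUp_nabla_pairDesc _ _ _).symm)]
  refine htp_map_of_par hC _ (by rw [GSums.Ttab_dim]; omega) ?_ ?_ w
  · simpa using (P.σUp_nabla_pairDesc _ _ _).trans
      ((P.σUp_nabla_pairDesc _ _ _).trans (P.σUp_nabla_pairDesc _ _ _)).symm
  · simpa using ((P.τUp_nabla_pairDesc _ _ _).trans (P.τUp_nabla_pairDesc _ _ _)).trans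
      (P.τUp_nabla_pairDesc _ _ _).symm

theorem htp_gcomp_map_map (hC : GS.Contractible) (hm : GS.IsModel X) (P : Pregroupoidal GS)
    {j i : ℕ} (hi : i ≤ j + 2) (f g t : Φ.D (j + 1) ⟶ Φ.D i) (hfg : Φ.σ j ≫ f = Φ.τ j ≫ g)
    (hσ : Φ.σ j ≫ g = Φ.σ j ≫ t) (hτ : Φ.τ j ≫ f = Φ.τ j ≫ t) (x : X.obj (op (Φ.D i))) :
    Htp (j + 1) (gcomp hm P j 0 (X.map f.op x) (X.map g.op x)) (X.map t.op x) := by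
  have hfg' : Φ.σUp j (0 + 1) ≫ f = Φ.τUp j (0 + 1) ≫ g := by simpa using hfg
  rw [gcomp_map_map hm P (k := 0) f g hfg']
  refine htp_map_of_par_globe hC hi ?_ ?_ x
  · exact (show Φ.σ j ≫ _ = Φ.σ j ≫ g by simpa using P.σUp_nabla_pairDesc f g hfg').trans hσ
  · exact (show Φ.τ j ≫ _ = Φ.τ j ≫ f by simpa using P.τUp_nabla_pairDesc f g hfg').trans hτ

theorem htp_gcomp_gunit_right (hC : GS.Contractible) (hm : GS.IsModel X)
    (P : Pregroupoidal GS) {j : ℕ} (u : X.obj (op (Φ.D (j + 1)))) :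
    Htp (j + 1) (gcomp hm P j 0 u (gunit P (asrc u))) u := by
  simpa [gunit, asrc] using htp_gcomp_map_map hC hm P (Nat.le_succ _) (𝟙 _) (P.kappa j ≫ Φ.σ j)
    (𝟙 _) (by simp [reassoc_of% P.kappa_τ]) (by simp [reassoc_of% P.kappa_σ]) rfl u

theorem htp_gcomp_gunit_left (hC : GS.Contractible) (hm : GS.IsModel X)
    (P : Pregroupoidal GS) {j : ℕ} (u : X.obj (op (Φ.D (j + 1)))) :
    Htp (j + 1) (gcomp hm P j 0 (gunit P (atgt u)) u) u := by
  simpa [gunit, atgt] using htp_gcomp_map_map hC hm P (Nat.le_succ _) (P.kappa j ≫ Φ.τ j) (𝟙 _)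
    (𝟙 _) (by simp [reassoc_of% P.kappa_σ]) rfl (by simp [reassoc_of% P.kappa_τ]) u

theorem htp_gcomp_gwinv_right (hC : GS.Contractible) (hm : GS.IsModel X)
    (P : Pregroupoidal GS) {j : ℕ} (u : X.obj (op (Φ.D (j + 1)))) :
    Htp (j + 1) (gcomp hm P j 0 u (gwinv P j 0 u)) (gunit P (atgt u)) := by
  simpa [gunit, gwinv, atgt] using htp_gcomp_map_map hC hm P (Nat.le_succ _) (𝟙 _) (P.winv j 0)
    (P.kappa j ≫ Φ.τ j) (by simp [P.winv_τ₀]) (by simp [P.winv_σ₀, reassoc_of% P.kappa_σ])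
    (by simp [reassoc_of% P.kappa_τ]) u

theorem htp_gcomp_gwinv_left (hC : GS.Contractible) (hm : GS.IsModel X)
    (P : Pregroupoidal GS) {j : ℕ} (u : X.obj (op (Φ.D (j + 1)))) :
    Htp (j + 1) (gcomp hm P j 0 (gwinv P j 0 u) u) (gunit P (asrc u)) := by
  simpa [gunit, gwinv, asrc] using htp_gcomp_map_map hC hm P (Nat.le_succ _) (P.winv j 0) (𝟙 _)
    (P.kappa j ≫ Φ.σ j) (by simp [P.winv_σ₀]) (by simp [reassoc_of% P.kappa_σ])
    (by simp [P.winv_τ₀, reassoc_of% P.kappa_τ]) u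

end Homotopy


theorem Pi_n_groupoid {E : Type u} [Category.{v} E] (Φ : Coglob E) (GS : GSums Φ)
    (hC : GS.Contractible) (X : Eᵒᵖ ⥤ Type w) (hm : GS.IsModel X)
    (P : Pregroupoidal GS) (m : ℕ) :
    -- the homotopy relation on `n`-arrows is an equivalence relation
    Equivalence (Htp (Φ := Φ) (X := X) (m + 1)) ∧
    -- compatibility of `*^n_{n-1}` with homotopy
    (∀ u u' v v' : arr (Φ := Φ) X (m + 1), Composable m 0 u v →
      Htp (m + 1) u u' → Htp (m + 1) v v' →
      Htp (m + 1) (gcomp hm P m 0 u v) (gcomp hm P m 0 u' v')) ∧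
    -- associativity up to homotopy
    (∀ u v z : arr (Φ := Φ) X (m + 1), Composable m 0 u v → Composable m 0 v z →
      Htp (m + 1) (gcomp hm P m 0 (gcomp hm P m 0 u v) z)
        (gcomp hm P m 0 u (gcomp hm P m 0 v z))) ∧
    -- units up to homotopy
    (∀ u : arr (Φ := Φ) X (m + 1),
      Htp (m + 1) (gcomp hm P m 0 u (gunit P (asrc u))) u ∧
      Htp (m + 1) (gcomp hm P m 0 (gunit P (atgt u)) u) u) ∧
    -- inverses up to homotopy
    (∀ u : arr (Φ := Φ) X (m + 1),
      Htp (m + 1) (gcomp hm P m 0 u (gwinv P m 0 u)) (gunit P (atgt u)) ∧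
      Htp (m + 1) (gcomp hm P m 0 (gwinv P m 0 u) u) (gunit P (asrc u))) :=
  ⟨htp_equivalence hm P (m + 1),
    fun _ _ _ _ hc hu hv => htp_gcomp_congr hm P hc hu hv,
    fun _ _ _ huv hvz => htp_gcomp_assoc hC hm P huv hvz,
    fun u => ⟨htp_gcomp_gunit_right hC hm P u, htp_gcomp_gunit_left hC hm P u⟩,
    fun u => ⟨htp_gcomp_gwinv_right hC hm P u, htp_gcomp_gwinv_left hC hm P u⟩⟩
end

section
/- Let ℳ be a model category equipped with a functor F : 𝔾 → ℳ from the globe category that is cofibrant (each latching map i_n : S_{n-1} → D_n is a cofibration, where S_{-1} = ∅ and S_{n-1} = D_{n-1} ∐_{S_{n-2}} D_{n-1}) and weakly contractible (each D_n is weakly contractible). Then every globular sum in ℳ (iterated pushout D_{i_1} ∐_{D_{i'_1}} ⋯ ∐_{D_{i'_{n-1}}} D_{i_n} along the maps σ and τ) is weakly contractible. -/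
/-!
STATEMENT 12: Let `ℳ` be a model category equipped with a functor `F : 𝔾 → ℳ` from
the globe category (a coglobular object) that is cofibrant (each latching map
`i_n : S_{n-1} → D_n` is a cofibration) and weakly contractible (each `D_n` is
weakly contractible).  Then every globular sum in `ℳ` (the iterated pushout
associated to a table of dimensions, glued along the maps `σ` and `τ`) is weakly
contractible.
-/

open CategoryTheory Opposite

universe w v u

open CategoryTheory CategoryTheory.Limits

/-- A (Quillen closed) model structure on a category: three classes of morphisms
(weak equivalences, cofibrations, fibrations) satisfying two-out-of-three,
stability under retracts, the lifting axioms and the factorization axioms.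
(Completeness assumptions are imposed separately via `HasFiniteLimits` etc.) -/
structure ModelStr (M : Type u) [Category.{v} M] where
  W : MorphismProperty M
  Cof : MorphismProperty M
  Fib : MorphismProperty M
  w_comp : ∀ {A B C : M} (f : A ⟶ B) (g : B ⟶ C), W f → W g → W (f ≫ g)
  w_cancel_left : ∀ {A B C : M} (f : A ⟶ B) (g : B ⟶ C), W (f ≫ g) → W g → W f
  w_cancel_right : ∀ {A B C : M} (f : A ⟶ B) (g : B ⟶ C), W (f ≫ g) → W f → W g
  retract_stable : ∀ {A B A' B' : M} (f : A ⟶ B) (g : A' ⟶ B')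
    (iA : A ⟶ A') (rA : A' ⟶ A) (iB : B ⟶ B') (rB : B' ⟶ B),
    iA ≫ rA = 𝟙 A → iB ≫ rB = 𝟙 B → iA ≫ g = f ≫ iB → g ≫ rB = rA ≫ f →
    (W g → W f) ∧ (Cof g → Cof f) ∧ (Fib g → Fib f)
  lift_cof_tfib : ∀ {A B X Y : M} (i : A ⟶ B) (p : X ⟶ Y),
    Cof i → Fib p → W p → HasLiftingProperty i p
  lift_tcof_fib : ∀ {A B X Y : M} (i : A ⟶ B) (p : X ⟶ Y),
    Cof i → W i → Fib p → HasLiftingProperty i p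
  fact_cof_tfib : ∀ {A B : M} (f : A ⟶ B),
    ∃ (Z : M) (i : A ⟶ Z) (p : Z ⟶ B), Cof i ∧ Fib p ∧ W p ∧ i ≫ p = f
  fact_tcof_fib : ∀ {A B : M} (f : A ⟶ B),
    ∃ (Z : M) (i : A ⟶ Z) (p : Z ⟶ B), Cof i ∧ W i ∧ Fib p ∧ i ≫ p = f

namespace ModelStr

variable {M : Type u} [Category.{v} M] (ms : ModelStr M)

/-- An object is weakly contractible if `X → *` is a weak equivalence. -/
def WeaklyContractible [HasTerminal M] (X : M) : Prop := ms.W (terminal.from X)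

/-- An object is fibrant if `X → *` is a fibration. -/
def Fibrant [HasTerminal M] (X : M) : Prop := ms.Fib (terminal.from X)

/-- An object is cofibrant if `∅ → X` is a cofibration. -/
def Cofibrant [HasInitial M] (X : M) : Prop := ms.Cof (initial.to X)

end ModelStr

section GlobMC

variable {M : Type u} [Category.{v} M]

/-- The globular sums of a coglobular object in a category with pushouts:
the iterated amalgamated sum associated to a table of dimensions, together with the
inclusion of the first globe. -/
noncomputable def gsumP [HasPushouts M] (Φ : Coglob M) :
    ∀ {i : ℕ}, GTable i → Σ' (S : M), (Φ.D i ⟶ S)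
  | _, .single i => ⟨Φ.D i, 𝟙 _⟩
  | _, .cons j d e T =>
    ⟨pushout (Φ.σUp j (d + 1)) (Φ.τUp j (e + 1) ≫ (gsumP Φ T).2),
      pushout.inl _ _⟩

/-- The spheres `S_{n-1}` of a coglobular object, with the inclusion
`i_n : S_{n-1} ⟶ D_n`: `S_{-1} = ∅` and `S_n = D_n ∐_{S_{n-1}} D_n`,
`i_{n+1} = (τ_{n+1}, σ_{n+1})`. -/
noncomputable def sphereP [HasInitial M] [HasPushouts M] (Φ : Coglob M) :
    ∀ n : ℕ, Σ' (Sob : M) (i : Sob ⟶ Φ.D n), i ≫ Φ.σ n = i ≫ Φ.τ n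
  | 0 => ⟨⊥_ M, initial.to _, initial.hom_ext _ _⟩
  | n + 1 =>
    ⟨pushout (sphereP Φ n).2.1 (sphereP Φ n).2.1,
      pushout.desc (Φ.τ n) (Φ.σ n) (sphereP Φ n).2.2.symm, by
        apply pushout.hom_ext
        · rw [pushout.inl_desc_assoc, pushout.inl_desc_assoc]
          exact Φ.relτ n
        · rw [pushout.inr_desc_assoc, pushout.inr_desc_assoc]
          exact Φ.relσ n⟩

/-- A coglobular object (functor `𝔾 → M`) is cofibrant if each latching morphism
`i_n : S_{n-1} ⟶ D_n` is a cofibration. -/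
def CofibrantCoglob [HasInitial M] [HasPushouts M] (ms : ModelStr M)
    (Φ : Coglob M) : Prop :=
  ∀ n : ℕ, ms.Cof (sphereP Φ n).2.1

/-- A coglobular object is weakly contractible if each globe `D_n` is weakly
contractible. -/
def WeaklyContractibleCoglob [HasTerminal M] (ms : ModelStr M) (Φ : Coglob M) :
    Prop :=
  ∀ n : ℕ, ms.WeaklyContractible (Φ.D n)

end GlobMC

/-!
Every cofibration in the diagram is built from the latching maps: `τ_n` is the cobase
change of `i_n` followed by `i_{n+1}`, so the iterated cotargets are cofibrations, and then so
is the inclusion of the first globe into a globular sum, by induction on the table. Gluing a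
globular sum onto `D_{j+d+1}` along `D_j` is then a pushout of a cofibration between weakly
contractible objects, i.e. of a trivial cofibration; the inclusion of `D_{j+d+1}` into the
result is again a trivial cofibration, and two-out-of-three finishes the induction.
-/

namespace ModelStr

variable {M : Type u} [Category.{v} M] (ms : ModelStr M)

/-- The retract argument: factoring `f` as a cofibration followed by a trivial fibration and
lifting `f` against the latter exhibits `f` as a retract of that cofibration. -/
lemma cof_of_hasLiftingProperty {A B : M} (f : A ⟶ B)
    (h : ∀ {X Y : M} (p : X ⟶ Y), ms.Fib p → ms.W p → HasLiftingProperty f p) :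
    ms.Cof f := by
  obtain ⟨Z, i, p, hi, hp, hwp, hfac⟩ := ms.fact_cof_tfib f
  have := h p hp hwp
  have sq : CommSq i f p (𝟙 B) := ⟨by simp [hfac]⟩
  exact (ms.retract_stable f i (𝟙 A) (𝟙 A) sq.lift p (Category.id_comp _)
    sq.fac_right (by simp [sq.fac_left]) (by simp [hfac])).2.1 hi

lemma w_of_hasLiftingProperty {A B : M} (f : A ⟶ B)
    (h : ∀ {X Y : M} (p : X ⟶ Y), ms.Fib p → HasLiftingProperty f p) : ms.W f := by
  obtain ⟨Z, i, p, -, hwi, hp, hfac⟩ := ms.fact_tcof_fib f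
  have := h p hp
  have sq : CommSq i f p (𝟙 B) := ⟨by simp [hfac]⟩
  exact (ms.retract_stable f i (𝟙 A) (𝟙 A) sq.lift p (Category.id_comp _)
    sq.fac_right (by simp [sq.fac_left]) (by simp [hfac])).1 hwi

lemma cof_id (A : M) : ms.Cof (𝟙 A) :=
  ms.cof_of_hasLiftingProperty _ fun _ _ _ => inferInstance

lemma cof_comp {A B C : M} {f : A ⟶ B} {g : B ⟶ C} (hf : ms.Cof f) (hg : ms.Cof g) :
    ms.Cof (f ≫ g) :=
  ms.cof_of_hasLiftingProperty _ fun p hp hwp =>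
    have := ms.lift_cof_tfib f p hf hp hwp
    have := ms.lift_cof_tfib g p hg hp hwp
    inferInstance

lemma cof_pushout_inl {A B C : M} (f : A ⟶ B) (g : A ⟶ C) [HasPushout f g]
    (hg : ms.Cof g) : ms.Cof (pushout.inl f g) :=
  ms.cof_of_hasLiftingProperty _ fun p hp hwp =>
    have := ms.lift_cof_tfib g p hg hp hwp
    inferInstance

lemma w_pushout_inl {A B C : M} (f : A ⟶ B) (g : A ⟶ C) [HasPushout f g]
    (hg : ms.Cof g) (hwg : ms.W g) : ms.W (pushout.inl f g) :=
  ms.w_of_hasLiftingProperty _ fun p hp =>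
    have := ms.lift_tcof_fib g p hg hwg hp
    inferInstance

lemma w_iff_weaklyContractible [HasTerminal M] {X Y : M} (hX : ms.WeaklyContractible X)
    (f : X ⟶ Y) : ms.W f ↔ ms.WeaklyContractible Y := by
  have hcomp : ms.W (f ≫ terminal.from Y) := by rwa [terminal.comp_from]
  exact ⟨ms.w_cancel_right _ _ hcomp, ms.w_cancel_left _ _ hcomp⟩

lemma weaklyContractible_pushout [HasTerminal M] {A B C : M} (f : A ⟶ B) (g : A ⟶ C)
    [HasPushout f g] (hg : ms.Cof g) (hA : ms.WeaklyContractible A)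
    (hB : ms.WeaklyContractible B) (hC : ms.WeaklyContractible C) :
    ms.WeaklyContractible (pushout f g) :=
  (ms.w_iff_weaklyContractible hB _).1 <|
    ms.w_pushout_inl f g hg ((ms.w_iff_weaklyContractible hA g).2 hC)

end ModelStr

namespace Coglob

variable {M : Type u} [Category.{v} M] [HasInitial M] [HasPushouts M]
  (ms : ModelStr M) {Φ : Coglob M}

lemma τ_eq_pushout_inl_comp (n : ℕ) :
    Φ.τ n = pushout.inl (sphereP Φ n).2.1 (sphereP Φ n).2.1 ≫ (sphereP Φ (n + 1)).2.1 :=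
  (pushout.inl_desc _ _ _).symm

lemma cof_τ (hcof : CofibrantCoglob ms Φ) (n : ℕ) : ms.Cof (Φ.τ n) := by
  rw [τ_eq_pushout_inl_comp]
  exact ms.cof_comp (ms.cof_pushout_inl _ _ (hcof n)) (hcof (n + 1))

lemma cof_τUp (hcof : CofibrantCoglob ms Φ) (j : ℕ) : ∀ k, ms.Cof (Φ.τUp j k)
  | 0 => ms.cof_id _
  | k + 1 => ms.cof_comp (cof_τUp hcof j k) (cof_τ ms hcof (j + k))

lemma cof_gsumP_snd (hcof : CofibrantCoglob ms Φ) : ∀ {i : ℕ} (T : GTable i),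
    ms.Cof (gsumP Φ T).2
  | _, .single _ => ms.cof_id _
  | _, .cons j _ e T =>
    ms.cof_pushout_inl _ _ (ms.cof_comp (cof_τUp ms hcof j (e + 1)) (cof_gsumP_snd hcof T))

end Coglob

theorem globular_sums_weakly_contractible_general {M : Type u} [Category.{v} M]
    [HasFiniteLimits M] [HasFiniteColimits M]
    (ms : ModelStr M) (Φ : Coglob M)
    (hcof : CofibrantCoglob ms Φ) (hwc : WeaklyContractibleCoglob ms Φ) :
    ∀ {i : ℕ} (T : GTable i), ms.WeaklyContractible (gsumP Φ T).1 := by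
  intro i T
  induction T with
  | single i => exact hwc i
  | cons j d e T ih =>
    exact ms.weaklyContractible_pushout _ _
      (ms.cof_comp (Coglob.cof_τUp ms hcof j (e + 1)) (Coglob.cof_gsumP_snd ms hcof T))
      (hwc j) (hwc (j + d + 1)) ih

theorem globular_sums_weakly_contractible {M : Type u} [Category.{v} M]
    [HasFiniteLimits M] [HasFiniteColimits M] [HasPushouts M]
    (ms : ModelStr M) (Φ : Coglob M)
    (hcof : CofibrantCoglob ms Φ) (hwc : WeaklyContractibleCoglob ms Φ) :
    ∀ {i : ℕ} (T : GTable i), ms.WeaklyContractible (gsumP Φ T).1 :=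
  globular_sums_weakly_contractible_general ms Φ hcof hwc
end

section
/- Let ℳ be a model category in which every object is fibrant, equipped with a cofibrant and weakly contractible functor F : 𝔾 → ℳ. Then the globular extension (ℳ, F) is contractible: every admissible pair (f, g) : D_n → X (globularly parallel morphisms into a globular sum X of dimension ≤ n+1) admits a lifting h : D_{n+1} → X with hσ_{n+1} = f and hτ_{n+1} = g. -/
/-!
STATEMENT 13: Let `ℳ` be a model category in which every object is fibrant,
equipped with a cofibrant and weakly contractible functor `F : 𝔾 → ℳ`.  Then the
globular extension `(ℳ, F)` is contractible: every admissible pair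
`(f, g) : D_n → X` (globularly parallel morphisms into a globular sum `X` of
dimension `≤ n + 1`) admits a lifting `h : D_{n+1} → X` with `h ∘ σ_{n+1} = f` and
`h ∘ τ_{n+1} = g`.
-/

open CategoryTheory Opposite

universe w v u

open CategoryTheory CategoryTheory.Limits

/-!
A parallel pair `(f, g) : D_n → X` is a map `S_n → X`, and `i_{n+1} : S_n → D_{n+1}` is a
cofibration, so a lift exists once `X → *` is a trivial fibration; as `X` is fibrant, this means
that the globular sum `X` is weakly contractible. Each `σ_n` is a cofibration between weakly contractible globes, hence a
trivial cofibration. A globular sum `X` arises from a smaller one `X'` by gluing a globe along an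
iterated cosource `D_j → D_{j+d+1}`, so `X' → X` is a pushout of a trivial cofibration, and weak
contractibility passes from `X'` to `X` by two-out-of-three.
-/

namespace ModelStr

variable {M : Type u} [Category.{v} M] (ms : ModelStr M)

lemma of_retractArrow {A B A' B' : M} {f : A ⟶ B} {g : A' ⟶ B'} (h : RetractArrow f g) :
    (ms.W g → ms.W f) ∧ (ms.Cof g → ms.Cof f) ∧ (ms.Fib g → ms.Fib f) :=
  ms.retract_stable f g h.i.left h.r.left h.i.right h.r.right h.retract_left h.retract_right
    h.i_w h.r_w.symm

instance isStableUnderRetracts_W : ms.W.IsStableUnderRetracts :=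
  ⟨fun h hg => (ms.of_retractArrow h).1 hg⟩

instance isStableUnderRetracts_Cof : ms.Cof.IsStableUnderRetracts :=
  ⟨fun h hg => (ms.of_retractArrow h).2.1 hg⟩

lemma cof_le_llp : ms.Cof ≤ (ms.Fib ⊓ ms.W).llp :=
  fun _ _ _ hi _ _ p ⟨hp, hwp⟩ => ms.lift_cof_tfib _ p hi hp hwp

lemma cof_inf_W_le_llp_fib : ms.Cof ⊓ ms.W ≤ ms.Fib.llp :=
  fun _ _ _ ⟨hi, hwi⟩ _ _ p hp => ms.lift_tcof_fib _ p hi hwi hp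

lemma llp_le_cof : (ms.Fib ⊓ ms.W).llp ≤ ms.Cof := fun _ _ f hf => by
  obtain ⟨_, i, p, hi, hp, hwp, fac⟩ := ms.fact_cof_tfib f
  have := hf p ⟨hp, hwp⟩
  exact MorphismProperty.of_retract (RetractArrow.ofLeftLiftingProperty fac) hi

lemma llp_fib_le_W : ms.Fib.llp ≤ ms.W := fun _ _ f hf => by
  obtain ⟨_, i, p, _, hwi, hp, fac⟩ := ms.fact_tcof_fib f
  have := hf p hp
  exact MorphismProperty.of_retract (RetractArrow.ofLeftLiftingProperty fac) hwi

variable [HasTerminal M]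

lemma W_of_weaklyContractible {A B : M} (f : A ⟶ B) (hA : ms.WeaklyContractible A)
    (hB : ms.WeaklyContractible B) : ms.W f :=
  ms.w_cancel_left f _ (by rwa [terminal.comp_from]) hB

lemma WeaklyContractible.of_W {A B : M} (hA : ms.WeaklyContractible A) {f : A ⟶ B}
    (hf : ms.W f) : ms.WeaklyContractible B :=
  ms.w_cancel_right f _ (by rwa [terminal.comp_from]) hf

end ModelStr

namespace Coglob

variable {M : Type u} [Category.{v} M]

lemma σUp_mem (Φ : Coglob M) (P : MorphismProperty M) [P.IsMultiplicative]
    (hσ : ∀ n, P (Φ.σ n)) (j : ℕ) : ∀ k, P (Φ.σUp j k)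
  | 0 => P.id_mem _
  | k + 1 => P.comp_mem _ _ (σUp_mem Φ P hσ j k) (hσ (j + k))

section Sphere

variable [HasInitial M] [HasPushouts M] (Φ : Coglob M)

lemma inl_sphereP_succ (n : ℕ) :
    (pushout.inl _ _ : Φ.D n ⟶ (sphereP Φ (n + 1)).1) ≫ (sphereP Φ (n + 1)).2.1 = Φ.τ n :=
  pushout.inl_desc _ _ _

lemma inr_sphereP_succ (n : ℕ) :
    (pushout.inr _ _ : Φ.D n ⟶ (sphereP Φ (n + 1)).1) ≫ (sphereP Φ (n + 1)).2.1 = Φ.σ n :=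
  pushout.inr_desc _ _ _

lemma sphereP_comp_eq_of_par : ∀ {n : ℕ} {Y : M} {f g : Φ.D n ⟶ Y}, Φ.Par f g →
    (sphereP Φ n).2.1 ≫ g = (sphereP Φ n).2.1 ≫ f
  | 0, _, _, _, _ => initial.hom_ext _ _
  | n + 1, _, f, g, ⟨hσ, hτ⟩ => by
    change pushout.desc (Φ.τ n) (Φ.σ n) _ ≫ g = pushout.desc (Φ.τ n) (Φ.σ n) _ ≫ f
    apply pushout.hom_ext
    · rw [pushout.inl_desc_assoc, pushout.inl_desc_assoc, hτ]
    · rw [pushout.inr_desc_assoc, pushout.inr_desc_assoc, hσ]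

lemma exists_lift_of_par [HasTerminal M] {n : ℕ} {X : M}
    [HasLiftingProperty (sphereP Φ (n + 1)).2.1 (terminal.from X)] {f g : Φ.D n ⟶ X}
    (hpar : Φ.Par f g) : ∃ h : Φ.D (n + 1) ⟶ X, Φ.σ n ≫ h = f ∧ Φ.τ n ≫ h = g := by
  let k : (sphereP Φ (n + 1)).1 ⟶ X := pushout.desc g f (sphereP_comp_eq_of_par Φ hpar)
  have sq : CommSq k (sphereP Φ (n + 1)).2.1 (terminal.from X) (terminal.from _) :=
    ⟨Subsingleton.elim _ _⟩
  refine ⟨sq.lift, ?_, ?_⟩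
  -- `(sphereP Φ (n + 1)).1` is a pushout only up to unfolding, which `rw` does not see through.
  · calc Φ.σ n ≫ sq.lift = (pushout.inr _ _ ≫ (sphereP Φ (n + 1)).2.1) ≫ sq.lift :=
          congrArg (· ≫ sq.lift) (inr_sphereP_succ Φ n).symm
      _ = pushout.inr _ _ ≫ k := (Category.assoc _ _ _).trans (congrArg _ sq.fac_left)
      _ = f := pushout.inr_desc _ _ _
  · calc Φ.τ n ≫ sq.lift = (pushout.inl _ _ ≫ (sphereP Φ (n + 1)).2.1) ≫ sq.lift :=
          congrArg (· ≫ sq.lift) (inl_sphereP_succ Φ n).symm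
      _ = pushout.inl _ _ ≫ k := (Category.assoc _ _ _).trans (congrArg _ sq.fac_left)
      _ = g := pushout.inl_desc _ _ _

end Sphere

variable [HasPushouts M] (ms : ModelStr M) (Φ : Coglob M)

lemma gsumP_weaklyContractible [HasTerminal M] (hσ : ∀ n, ms.Fib.llp (Φ.σ n))
    (hwc : WeaklyContractibleCoglob ms Φ) : ∀ {i : ℕ} (T : GTable i),
    ms.WeaklyContractible (gsumP Φ T).1
  | _, .single i => hwc i
  | _, .cons j d _ T => (gsumP_weaklyContractible hσ hwc T).of_W ms
      (ms.llp_fib_le_W _ (MorphismProperty.pushout_inr _ _ (Φ.σUp_mem _ hσ j (d + 1))))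

variable [HasInitial M]

-- `σ_n` factors as `D_n → S_n → D_{n+1}`, a pushout of `i_n` followed by `i_{n+1}`.
lemma cof_σ (hcof : CofibrantCoglob ms Φ) (n : ℕ) : ms.Cof (Φ.σ n) :=
  inr_sphereP_succ Φ n ▸ ms.llp_le_cof _ (MorphismProperty.comp_mem _ _ _
    (MorphismProperty.pushout_inr _ _ (ms.cof_le_llp _ (hcof n))) (ms.cof_le_llp _ (hcof (n + 1))))

lemma σ_mem_llp_fib [HasTerminal M] (hcof : CofibrantCoglob ms Φ)
    (hwc : WeaklyContractibleCoglob ms Φ) (n : ℕ) : ms.Fib.llp (Φ.σ n) :=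
  ms.cof_inf_W_le_llp_fib _
    ⟨Φ.cof_σ ms hcof n, ms.W_of_weaklyContractible _ (hwc n) (hwc (n + 1))⟩

end Coglob

theorem model_category_globular_extension_contractible_general {M : Type u}
    [Category.{v} M] [HasFiniteLimits M] [HasFiniteColimits M]
    (ms : ModelStr M) (Φ : Coglob M)
    (hcof : CofibrantCoglob ms Φ) (hwc : WeaklyContractibleCoglob ms Φ)
    (hfib : ∀ X : M, ms.Fibrant X) :
    ∀ (n : ℕ) {i : ℕ} (T : GTable i), T.dim ≤ n + 1 →
      ∀ f g : Φ.D n ⟶ (gsumP Φ T).1, Φ.Par f g →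
        ∃ h : Φ.D (n + 1) ⟶ (gsumP Φ T).1,
          Φ.σ n ≫ h = f ∧ Φ.τ n ≫ h = g := by
  intro n i T _ f g hpar
  have hσ := Coglob.σ_mem_llp_fib ms Φ hcof hwc
  have : HasLiftingProperty (sphereP Φ (n + 1)).2.1 (terminal.from (gsumP Φ T).1) :=
    ms.lift_cof_tfib _ _ (hcof (n + 1)) (hfib _) (Coglob.gsumP_weaklyContractible ms Φ hσ hwc T)
  exact Φ.exists_lift_of_par hpar

theorem model_category_globular_extension_contractible {M : Type u}
    [Category.{v} M] [HasFiniteLimits M] [HasFiniteColimits M] [HasPushouts M]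
    (ms : ModelStr M) (Φ : Coglob M)
    (hcof : CofibrantCoglob ms Φ) (hwc : WeaklyContractibleCoglob ms Φ)
    (hfib : ∀ X : M, ms.Fibrant X) :
    ∀ (n : ℕ) {i : ℕ} (T : GTable i), T.dim ≤ n + 1 →
      ∀ f g : Φ.D n ⟶ (gsumP Φ T).1, Φ.Par f g →
        ∃ h : Φ.D (n + 1) ⟶ (gsumP Φ T).1,
          Φ.σ n ≫ h = f ∧ Φ.τ n ≫ h = g :=
  model_category_globular_extension_contractible_general ms Φ hcof hwc hfib
end

section
/- In any model category ℳ, there exists a cofibrant and weakly contractible functor F : 𝔾 → ℳ: one can construct objects D_n and cofibrations i_n : S_{n-1} → D_n by setting D_0 to be a cofibrant replacement of the terminal object, and for n ≥ 1 factoring the fold map (id, id) : S_{n-1} → D_{n-1} as a cofibration i_n followed by a weak equivalence p_n; setting σ_n = i_n ε_2 and τ_n = i_n ε_1 yields the coglobular relations, each D_n is weakly contractible, and each i_n is a cofibration. -/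
/-!
STATEMENT 14: In any model category `ℳ`, there exists a cofibrant and weakly
contractible functor `F : 𝔾 → ℳ` (a coglobular object such that each latching map
`i_n : S_{n-1} → D_n` is a cofibration and each `D_n` is weakly contractible).
It is constructed by taking `D_0` a cofibrant replacement of the terminal object
and factoring each fold map `(id, id) : S_{n-1} → D_{n-1}` as a cofibration `i_n`
followed by a weak equivalence `p_n`; the coglobular relations hold for
`σ_n = i_n ∘ ε₂`, `τ_n = i_n ∘ ε₁`.
-/

open CategoryTheory Opposite

universe w v u

open CategoryTheory CategoryTheory.Limits

namespace Coglob

variable {M : Type u} [Category.{v} M] [HasPushouts M] (Φ : Coglob M)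

lemma pushout_desc_comp_σ {n : ℕ} {S : M} {i : S ⟶ Φ.D n}
    (w : i ≫ Φ.τ n = i ≫ Φ.σ n) :
    pushout.desc (Φ.τ n) (Φ.σ n) w ≫ Φ.σ (n + 1) =
      pushout.desc (Φ.τ n) (Φ.σ n) w ≫ Φ.τ (n + 1) := by
  apply pushout.hom_ext
  · simpa only [pushout.inl_desc_assoc] using Φ.relτ n
  · simpa only [pushout.inr_desc_assoc] using Φ.relσ n

variable [HasInitial M] {Φ}

lemma sphereP_succ_of_eq {n : ℕ} {S : M} {i : S ⟶ Φ.D n} {hi : i ≫ Φ.σ n = i ≫ Φ.τ n}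
    (hn : sphereP Φ n = ⟨S, i, hi⟩) :
    sphereP Φ (n + 1) = ⟨pushout i i, pushout.desc (Φ.τ n) (Φ.σ n) hi.symm,
      Φ.pushout_desc_comp_σ hi.symm⟩ := by
  -- `sphereP Φ (n + 1)` carries a `HasPushout` proof specialised to `sphereP Φ n`, which blocks
  -- rewriting; restate its unfolding with the instance found afresh.
  obtain ⟨h, e⟩ : ∃ h, sphereP Φ (n + 1) = ⟨pushout (sphereP Φ n).2.1 (sphereP Φ n).2.1,
      pushout.desc (Φ.τ n) (Φ.σ n) (sphereP Φ n).2.2.symm, h⟩ := ⟨_, rfl⟩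
  revert h e
  rw [hn]
  exact fun _ e => e

end Coglob

namespace ModelStr

variable {M : Type u} [Category.{v} M] (ms : ModelStr M)

noncomputable def cofWFactorization {A B : M} (f : A ⟶ B) :
    MorphismProperty.MapFactorizationData ms.Cof ms.W f := by
  choose Z i p hi _ hp fac using ms.fact_cof_tfib f
  exact { Z, i, p, fac, hi, hp }

variable {ms}

lemma weaklyContractible_of_W [HasTerminal M] {X Y : M} {p : X ⟶ Y} (hp : ms.W p)
    (hY : ms.WeaklyContractible Y) : ms.WeaklyContractible X := by
  rw [WeaklyContractible, ← terminal.comp_from p]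
  exact ms.w_comp _ _ hp hY

variable (ms)

/-- `i` plays the role of the boundary inclusion `i_n : S_{n-1} ⟶ D_n`. -/
structure DiskData [HasTerminal M] where
  S : M
  D : M
  i : S ⟶ D
  cof : ms.Cof i
  weaklyContractible : ms.WeaklyContractible D

namespace DiskData

noncomputable def zero [HasInitial M] [HasTerminal M] : ms.DiskData :=
  let F := ms.cofWFactorization (initial.to (⊤_ M))
  { S := ⊥_ M
    D := F.Z
    i := initial.to F.Z
    cof := by rw [initial.hom_ext (initial.to F.Z) F.i]; exact F.hi
    weaklyContractible := by
      rw [WeaklyContractible, terminal.hom_ext (terminal.from F.Z) F.p]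
      exact F.hp }

variable {ms}

noncomputable abbrev succ [HasTerminal M] [HasPushouts M] (P : ms.DiskData) : ms.DiskData :=
  let F := ms.cofWFactorization (pushout.codiagonal P.i)
  { S := pushout P.i P.i
    D := F.Z
    i := F.i
    cof := F.hi
    weaklyContractible := weaklyContractible_of_W F.hp P.weaklyContractible }

end DiskData

variable [HasInitial M] [HasTerminal M] [HasPushouts M]

-- Reducible, so that `(diskTower (n + 1)).S` is seen as `pushout _ _` by `simp`.
noncomputable abbrev diskTower : ℕ → ms.DiskData
  | 0 => DiskData.zero ms
  | n + 1 => (diskTower n).succ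

noncomputable def towerCoglob : Coglob M where
  D n := (ms.diskTower n).D
  σ n := pushout.inr (ms.diskTower n).i (ms.diskTower n).i ≫ (ms.diskTower (n + 1)).i
  τ n := pushout.inl (ms.diskTower n).i (ms.diskTower n).i ≫ (ms.diskTower (n + 1)).i
  relσ n := by simp only [Category.assoc, pushout.condition_assoc]
  relτ n := by simp only [Category.assoc, pushout.condition_assoc]

lemma sphereP_towerCoglob (n : ℕ) :
    sphereP ms.towerCoglob n =
      ⟨(ms.diskTower n).S, (ms.diskTower n).i, (pushout.condition_assoc _).symm⟩ := by
  induction n with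
  | zero => rfl
  | succ n ih =>
    rw [Coglob.sphereP_succ_of_eq ih]
    congr 2
    apply pushout.hom_ext
    · exact pushout.inl_desc _ _ _
    · exact pushout.inr_desc _ _ _

end ModelStr

theorem exists_cofibrant_weakly_contractible_coglob_general {M : Type u}
    [Category.{v} M] [HasFiniteLimits M] [HasFiniteColimits M]
    (ms : ModelStr M) :
    ∃ Φ : Coglob M, CofibrantCoglob ms Φ ∧ WeaklyContractibleCoglob ms Φ :=
  ⟨ms.towerCoglob, fun n => by rw [ms.sphereP_towerCoglob]; exact (ms.diskTower n).cof,
    fun n => (ms.diskTower n).weaklyContractible⟩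

theorem exists_cofibrant_weakly_contractible_coglob {M : Type u}
    [Category.{v} M] [HasFiniteLimits M] [HasFiniteColimits M] [HasPushouts M]
    (ms : ModelStr M) :
    ∃ Φ : Coglob M, CofibrantCoglob ms Φ ∧ WeaklyContractibleCoglob ms Φ :=
  exists_cofibrant_weakly_contractible_coglob_general ms
end
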